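/- arXiv:2405.10249 — 2 statements merged into one kernel-verified Lean document; each statement's English description precedes it below -/
import Mathlib

section
/- Let Δ ≥ 0. Define, in an abstract message-timing model, a schedule as a set S of pairs (s, r) ∈ ℝ≥0 × ℝ≥0 with s ≤ r (send time, receive time). Say S satisfies UL(Δ) if r ≤ s + Δ for all (s, r) ∈ S, and satisfies GST(Δ', T) if r ≤ max(s, T) + Δ' for all (s, r) ∈ S. Prove: if S satisfies UL(Δ) under real time, then the transformed schedule S' = {(√s, √r) : (s, r) ∈ S} satisfies GST(1, T) with T = (1/2)·(max(1, Δ) − 1). -/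
/-! With `m = max √s T` we have `s ≤ m²` and `2T + 1 ≤ 2m + 1`, so any `r ≤ s + (2T + 1)` satisfies
`r ≤ (m + 1)²`; and `Δ ≤ 2T + 1` for `T = (max 1 Δ - 1) / 2`. -/

theorem Real.sqrt_le_max_sqrt_add_one {s r T : ℝ} (hs : 0 ≤ s) (hr : r ≤ s + (2 * T + 1)) :
    √r ≤ max (√s) T + 1 := by
  set m := max (√s) T
  have hsm : √s ≤ m := le_max_left _ _
  have hTm : T ≤ m := le_max_right _ _
  have hs_le : s ≤ m ^ 2 := by
    rw [← Real.sq_sqrt hs]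
    exact pow_le_pow_left₀ (Real.sqrt_nonneg s) hsm 2
  rw [Real.sqrt_le_left (by linarith [Real.sqrt_nonneg s])]
  nlinarith

theorem UL_to_GST_schedule_general (Δ : ℝ) (S : Set (ℝ × ℝ))
    (hS : ∀ p ∈ S, 0 ≤ p.1 ∧ p.1 ≤ p.2)
    (hUL : ∀ p ∈ S, p.2 ≤ p.1 + Δ) :
    ∀ p ∈ S, Real.sqrt p.2 ≤ max (Real.sqrt p.1) ((1 / 2) * (max 1 Δ - 1)) + 1 := by
  intro p hp
  refine Real.sqrt_le_max_sqrt_add_one (hS p hp).1 ?_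
  linarith [hUL p hp, le_max_right 1 Δ]

theorem UL_to_GST_schedule (Δ : ℝ) (hΔ : 0 ≤ Δ) (S : Set (ℝ × ℝ))
    (hS : ∀ p ∈ S, 0 ≤ p.1 ∧ p.1 ≤ p.2)
    (hUL : ∀ p ∈ S, p.2 ≤ p.1 + Δ) :
    ∀ p ∈ S, Real.sqrt p.2 ≤ max (Real.sqrt p.1) ((1 / 2) * (max 1 Δ - 1)) + 1 :=
  UL_to_GST_schedule_general Δ S hS hUL
end

section
/- For every Δ ≥ 0 there exists T ≥ 0 such that for all reals s, r with 0 ≤ s ≤ r ≤ s + Δ, one has √r ≤ max(√s, T) + 1; explicitly one may take T = (1/2)·(max(1, Δ) − 1). -/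
/-!
Since `(m + 1)² = m² + (2m + 1)`, the square root rises by at most `1` along any step of length at
most `2m + 1` that starts at a point whose root is at most `m`. Taking `m = max (√s) T`, the step
`Δ ≤ max 1 Δ = 2T + 1 ≤ 2m + 1` is short enough.
-/

theorem Real.sqrt_le_add_one_of_le_add {s r m : ℝ} (hm : 0 ≤ m) (hs : √s ≤ m)
    (hr : r ≤ s + (2 * m + 1)) : √r ≤ m + 1 := by
  have hsm : s ≤ m ^ 2 := (Real.sqrt_le_left hm).1 hs
  refine (Real.sqrt_le_left (by linarith)).2 ?_
  calc r ≤ m ^ 2 + (2 * m + 1) := by linarith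
    _ = (m + 1) ^ 2 := by ring

theorem schedule_transform_GST_general (Δ : ℝ) :
    ∃ T : ℝ, 0 ≤ T ∧ T = (1 / 2) * (max 1 Δ - 1) ∧
      ∀ s r : ℝ, 0 ≤ s → s ≤ r → r ≤ s + Δ →
        Real.sqrt r ≤ max (Real.sqrt s) T + 1 := by
  obtain ⟨T, hT⟩ : ∃ T : ℝ, T = (1 / 2) * (max 1 Δ - 1) := ⟨_, rfl⟩
  have hT_nonneg : 0 ≤ T := by linarith [le_max_left 1 Δ]
  refine ⟨T, hT_nonneg, hT, fun s r _ _ hr => ?_⟩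
  have hΔ_le : Δ ≤ 2 * T + 1 := by linarith [le_max_right 1 Δ]
  have hT_le : T ≤ max (√s) T := le_max_right _ _
  exact Real.sqrt_le_add_one_of_le_add (hT_nonneg.trans hT_le) (le_max_left _ _) (by linarith)

theorem schedule_transform_GST (Δ : ℝ) (hΔ : 0 ≤ Δ) :
    ∃ T : ℝ, 0 ≤ T ∧ T = (1 / 2) * (max 1 Δ - 1) ∧
      ∀ s r : ℝ, 0 ≤ s → s ≤ r → r ≤ s + Δ →
        Real.sqrt r ≤ max (Real.sqrt s) T + 1 :=
  schedule_transform_GST_general Δ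
end
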